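/- arXiv:2510.23491 — 10 statements merged into one kernel-verified Lean document; each statement's English description precedes it below -/
import Mathlib

section
/- Let C be a closed convex subset of the Euclidean space ℝ^n (n ≥ 1) whose n-dimensional Lebesgue measure (volume) is nonzero. Then there exists a countable family of functions g_k : ℝ^n → ℝ (k ∈ ℕ), each continuously differentiable, such that C = {v ∈ ℝ^n : g_k(v) ≥ 0 for every k}, and for every k and every v ∈ ℝ^n with g_k(v) = 0, the Fréchet derivative of g_k at v is nonzero. -/
open MeasureTheory RealInnerProductSpace

/-- Lemma 1 of the paper. A closed convex subset of `ℝ^n` (`n ≥ 1`) with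
nonzero Lebesgue measure can be written as the common zero-superlevel set of countably many
`C¹` functions whose Fréchet derivatives do not vanish on their zero sets. -/
theorem closed_convex_eq_superlevel_sets
    (n : ℕ) (hn : 1 ≤ n) (C : Set (EuclideanSpace ℝ (Fin n)))
    (hC_closed : IsClosed C) (hC_convex : Convex ℝ C)
    (hC_vol : volume C ≠ 0) :
    ∃ g : ℕ → EuclideanSpace ℝ (Fin n) → ℝ,
      (∀ k, ContDiff ℝ 1 (g k)) ∧
      C = {v : EuclideanSpace ℝ (Fin n) | ∀ k, 0 ≤ g k v} ∧
      (∀ k (v : EuclideanSpace ℝ (Fin n)), g k v = 0 → fderiv ℝ (g k) v ≠ 0) := by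
  classical
  have hCne : C.Nonempty := by
    rcases C.eq_empty_or_nonempty with h | h
    · simp [h] at hC_vol
    · exact h
  by_cases hcc : Cᶜ = ∅
  · refine ⟨fun _ _ => 1, fun k => contDiff_const, ?_, ?_⟩
    · have hU : C = Set.univ := Set.compl_empty_iff.mp hcc
      rw [hU]; ext v; simp
    · intro k v h; norm_num at h
  · have hTne : (Cᶜ).Nonempty := Set.nonempty_iff_ne_empty.mpr hcc
    obtain ⟨s, hs_count, hs_dense⟩ := TopologicalSpace.exists_countable_dense ↥(Cᶜ)
    have ht_count : (Subtype.val '' s : Set (EuclideanSpace ℝ (Fin n))).Countable :=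
      hs_count.image _
    have ht_sub : (Subtype.val '' s) ⊆ Cᶜ := by rintro _ ⟨⟨x, hx⟩, _, rfl⟩; exact hx
    have ht_ne : (Subtype.val '' s).Nonempty := by
      rcases hTne with ⟨v, hv⟩
      rcases hs_dense.exists_mem_open isOpen_univ ⟨⟨v, hv⟩, trivial⟩ with ⟨y, hy, -⟩
      exact ⟨y.1, y, hy, rfl⟩
    obtain ⟨x, hx_range⟩ := Set.Countable.exists_eq_range ht_count ht_ne
    have hx_mem : ∀ k, x k ∉ C := fun k => ht_sub (hx_range ▸ Set.mem_range_self k)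
    have ht_dense : ∀ v ∈ Cᶜ, ∀ ε > 0, ∃ k, dist v (x k) < ε := by
      intro v hv ε hε
      have hcl : (⟨v, hv⟩ : ↥(Cᶜ)) ∈ closure s := hs_dense _
      rcases Metric.mem_closure_iff.mp hcl ε hε with ⟨b, hb, hdb⟩
      have hbt : b.1 ∈ Subtype.val '' s := ⟨b, hb, rfl⟩
      rw [hx_range] at hbt
      rcases hbt with ⟨k, hk⟩
      refine ⟨k, ?_⟩; rw [hk]; simpa [Subtype.dist_eq] using hdb
    have hproj : ∀ k : ℕ, ∃ p ∈ C, ∀ w ∈ C, ⟪x k - p, w - p⟫ ≤ 0 := by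
      intro k
      obtain ⟨p, hp, hmin⟩ := exists_norm_eq_iInf_of_complete_convex hCne
        hC_closed.isComplete hC_convex (x k)
      exact ⟨p, hp, (norm_eq_iInf_iff_real_inner_le_zero hC_convex hp).mp hmin⟩
    choose p hpC hpmin using hproj
    have ha_ne : ∀ k, p k - x k ≠ 0 := by
      intro k h
      rw [sub_eq_zero] at h
      exact hx_mem k (h ▸ hpC k)
    refine ⟨fun k u => ⟪p k - x k, u⟫ - ⟪p k - x k, p k⟫, ?_, ?_, ?_⟩
    · intro k
      exact ((innerSL ℝ (p k - x k)).contDiff).sub contDiff_const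
    · ext v
      simp only [Set.mem_setOf_eq]
      constructor
      · intro hv k
        have h := hpmin k v hv
        have he : ⟪p k - x k, v⟫ - ⟪p k - x k, p k⟫ = -⟪x k - p k, v - p k⟫ := by
          rw [← inner_sub_right, show p k - x k = -(x k - p k) from by abel,
            inner_neg_left]
        rw [he]; linarith
      · intro hv
        by_contra hvC
        have hd : 0 < Metric.infDist v C :=
          (hC_closed.notMem_iff_infDist_pos hCne).mp hvC
        obtain ⟨k, hk⟩ := ht_dense v hvC (Metric.infDist v C / 3) (by linarith)
        have hnorm : ‖p k - x k‖ = dist (x k) (p k) := by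
          rw [dist_eq_norm, norm_sub_rev]
        have h1 : Metric.infDist (x k) C ≤ dist (x k) (p k) :=
          Metric.infDist_le_dist_of_mem (hpC k)
        have h2 : Metric.infDist v C ≤ Metric.infDist (x k) C + dist v (x k) :=
          Metric.infDist_le_infDist_add_dist
        have hlow : 2 * Metric.infDist v C / 3 ≤ ‖p k - x k‖ := by
          rw [hnorm]; linarith
        have hip : ⟪p k - x k, v - x k⟫ ≤ ‖p k - x k‖ * ‖v - x k‖ :=
          real_inner_le_norm _ _
        have hvx : ‖v - x k‖ < Metric.infDist v C / 3 := by
          rw [← dist_eq_norm]; exact hk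
        have hgv : ⟪p k - x k, v⟫ - ⟪p k - x k, p k⟫
            = ⟪p k - x k, v - x k⟫ - ‖p k - x k‖ ^ 2 := by
          rw [← inner_sub_right, show v - p k = (v - x k) - (p k - x k) from by abel,
            inner_sub_right, real_inner_self_eq_norm_sq]
        have hge := hv k
        rw [hgv] at hge
        have hna : 0 < ‖p k - x k‖ := norm_pos_iff.mpr (ha_ne k)
        nlinarith [norm_nonneg (v - x k)]
    · intro k v _ h0
      have hfd : HasFDerivAt (fun u => ⟪p k - x k, u⟫ - ⟪p k - x k, p k⟫)
          (innerSL ℝ (p k - x k)) v :=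
        ((innerSL ℝ (p k - x k)).hasFDerivAt (x := v)).sub_const _
      rw [hfd.fderiv] at h0
      have hz := congrArg (fun f : EuclideanSpace ℝ (Fin n) →L[ℝ] ℝ => f (p k - x k)) h0
      simp only [innerSL_apply_apply, ContinuousLinearMap.zero_apply] at hz
      rw [real_inner_self_eq_norm_sq] at hz
      have : ‖p k - x k‖ = 0 := by nlinarith [norm_nonneg (p k - x k)]
      exact ha_ne k (norm_eq_zero.mp this)
end

section
/- Let C be a closed convex subset of ℝ^n, let v, w ∈ C, and let z ∈ ℝ^n. Define the tangent cone of C at v as T = closure { y ∈ ℝ^n : there exist t ≥ 0 and c ∈ C with y = t • (c - v) }. Suppose p ∈ T is a nearest point of T to z, i.e. ‖p - z‖ ≤ ‖y - z‖ for every y ∈ T. Then ⟪v - w, p⟫ ≤ ⟪v - w, z⟫. -/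
/-!
The tangent cone `T` is a closed convex cone containing `w - v`. Being a cone, it contains
`p + (w - v)` along with `p`, so the variational inequality characterising the projection onto a
convex set gives `⟪z - p, w - v⟫ ≤ 0`.
-/

open scoped RealInnerProductSpace

section DirectionCone

variable {𝕜 E : Type*} [Field 𝕜] [LinearOrder 𝕜] [IsStrictOrderedRing 𝕜]
  [AddCommGroup E] [Module 𝕜 E]

/-- The cone generated by `C - v`; its closure is the tangent cone of `C` at `v`. -/
def Convex.directionCone {C : Set E} (hC : Convex 𝕜 C) {v : E} (hv : v ∈ C) :
    PointedCone 𝕜 E where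
  carrier := {y | ∃ t : 𝕜, 0 ≤ t ∧ ∃ c ∈ C, y = t • (c - v)}
  zero_mem' := ⟨0, le_rfl, v, hv, (zero_smul 𝕜 _).symm⟩
  add_mem' := by
    rintro _ _ ⟨s, hs, c, hc, rfl⟩ ⟨t, ht, d, hd, rfl⟩
    obtain ⟨e, he, hcombo⟩ := hC.exists_mem_add_smul_eq hc hd hs ht
    refine ⟨s + t, add_nonneg hs ht, e, he, ?_⟩
    rw [smul_sub (s + t), hcombo]
    module
  smul_mem' := by
    rintro ⟨a, ha⟩ _ ⟨t, ht, c, hc, rfl⟩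
    exact ⟨a * t, mul_nonneg ha ht, c, hc, (mul_smul a t _).symm⟩

end DirectionCone

section Projection

variable {F : Type*} [NormedAddCommGroup F] [InnerProductSpace ℝ F]

theorem real_inner_sub_le_zero_of_forall_norm_sub_le {K : Set F} (hK : Convex ℝ K)
    {p z y : F} (hp : p ∈ K) (hnear : ∀ y ∈ K, ‖p - z‖ ≤ ‖y - z‖) (hy : y ∈ K) :
    ⟪z - p, y - p⟫ ≤ 0 := by
  have : Nonempty K := ⟨⟨p, hp⟩⟩
  refine (norm_eq_iInf_iff_real_inner_le_zero hK hp).1 (le_antisymm ?_ ?_) y hy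
  · exact le_ciInf fun y => by simpa only [norm_sub_rev z] using hnear y y.2
  · have hbdd : BddBelow (Set.range fun y : K => ‖z - y‖) :=
      ⟨0, Set.forall_mem_range.2 fun _ => norm_nonneg _⟩
    exact ciInf_le hbdd ⟨p, hp⟩

theorem PointedCone.real_inner_sub_le_zero_of_forall_norm_sub_le (K : PointedCone ℝ F)
    {p z y : F} (hp : p ∈ K) (hnear : ∀ y ∈ K, ‖p - z‖ ≤ ‖y - z‖) (hy : y ∈ K) :
    ⟪z - p, y⟫ ≤ 0 := by
  simpa only [add_sub_cancel_left] using
    _root_.real_inner_sub_le_zero_of_forall_norm_sub_le K.convex hp hnear (K.add_mem hp hy)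

end Projection

theorem proj_tangentCone_inner_le_general
    (n : ℕ) (C : Set (EuclideanSpace ℝ (Fin n)))
    (hC_convex : Convex ℝ C)
    (v w : EuclideanSpace ℝ (Fin n)) (hv : v ∈ C) (hw : w ∈ C)
    (z p : EuclideanSpace ℝ (Fin n))
    (T : Set (EuclideanSpace ℝ (Fin n)))
    (hT : T = closure {y : EuclideanSpace ℝ (Fin n) |
      ∃ t : ℝ, 0 ≤ t ∧ ∃ c ∈ C, y = t • (c - v)})
    (hpT : p ∈ T)
    (hnear : ∀ y ∈ T, ‖p - z‖ ≤ ‖y - z‖) :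
    ⟪v - w, p⟫ ≤ ⟪v - w, z⟫ := by
  set K := (hC_convex.directionCone hv).closure
  have hTK : T = K := by rw [hT, PointedCone.coe_closure]; rfl
  subst hTK
  have hwv : w - v ∈ K := subset_closure ⟨1, zero_le_one, w, hw, (one_smul ℝ _).symm⟩
  have hpolar := K.real_inner_sub_le_zero_of_forall_norm_sub_le hpT hnear hwv
  rw [← neg_sub v w, inner_neg_right, real_inner_comm, inner_sub_right] at hpolar
  linarith

/-- Lemma 2 of the paper. The metric projection onto the tangent cone of a
closed convex set `C` at `v ∈ C` does not increase inner products against directions `v - w`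
with `w ∈ C`. -/
theorem proj_tangentCone_inner_le
    (n : ℕ) (C : Set (EuclideanSpace ℝ (Fin n)))
    (hC_closed : IsClosed C) (hC_convex : Convex ℝ C)
    (v w : EuclideanSpace ℝ (Fin n)) (hv : v ∈ C) (hw : w ∈ C)
    (z p : EuclideanSpace ℝ (Fin n))
    (T : Set (EuclideanSpace ℝ (Fin n)))
    (hT : T = closure {y : EuclideanSpace ℝ (Fin n) |
      ∃ t : ℝ, 0 ≤ t ∧ ∃ c ∈ C, y = t • (c - v)})
    (hpT : p ∈ T)
    (hnear : ∀ y ∈ T, ‖p - z‖ ≤ ‖y - z‖) :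
    ⟪v - w, p⟫ ≤ ⟪v - w, z⟫ :=
  proj_tangentCone_inner_le_general n C hC_convex v w hv hw z p T hT hpT hnear
end

section
/- Let A_m, P, Q be real n×n matrices with P symmetric, A_mᵀP + P·A_m = -Q, and suppose ⟪x, Q·x⟫ ≥ 0 for every x ∈ ℝ^n. Let B be a real n×m matrix, γ > 0 a real number, and Φ : ℝ → (m×p real matrices) any function. Let e : ℝ → ℝ^n and θ̃ : ℝ → ℝ^p be differentiable functions such that for all t ≥ 0: (i) e'(t) = A_m·e(t) + B·(Φ(t)·θ̃(t)), and (ii) ⟪θ̃(t), θ̃'(t)⟫ ≤ -γ·⟪θ̃(t), Φ(t)ᵀ·Bᵀ·P·e(t)⟫. Define V(t) = ⟪e(t), P·e(t)⟫ + ‖θ̃(t)‖²/γ. Then V(t) ≤ V(s) for all 0 ≤ s ≤ t; moreover, if μ > 0 satisfies ⟪x, P·x⟫ ≥ μ·‖x‖² for all x, then ‖e(t)‖² ≤ V(0)/μ for all t ≥ 0. -/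
open scoped RealInnerProductSpace Matrix

/-! Along a trajectory, `V' = 2⟪e', Pe⟫ + 2⟪θ̃, θ̃'⟫/γ`. Substituting the error dynamics and the
Lyapunov equation gives `2⟪e', Pe⟫ = -⟪e, Qe⟫ + 2⟪θ̃, ΦᵀBᵀPe⟫`, and the adaptive law bounds the
parameter term by exactly `-2⟪θ̃, ΦᵀBᵀPe⟫`, so the cross terms cancel and `V' ≤ -⟪e, Qe⟫ ≤ 0`.
Hence `V` is antitone on `[0, ∞)`, and `μ‖e t‖² ≤ ⟪e t, P e t⟫ ≤ V t ≤ V 0`. -/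

namespace Matrix

variable {ι κ : Type*} [Fintype ι] [Fintype κ]

theorem inner_toLp_mulVec_left (M : Matrix ι κ ℝ) (x : EuclideanSpace ℝ κ)
    (y : EuclideanSpace ℝ ι) :
    ⟪WithLp.toLp 2 (M *ᵥ x), y⟫ = ⟪x, WithLp.toLp 2 (Mᵀ *ᵥ y)⟫ := by
  simp only [EuclideanSpace.inner_eq_star_dotProduct, star_trivial, mulVec_transpose,
    dotProduct_mulVec, dotProduct_comm]

theorem IsSymm.inner_toLp_mulVec_comm {P : Matrix ι ι ℝ} (hP : P.IsSymm)
    (x y : EuclideanSpace ℝ ι) :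
    ⟪x, WithLp.toLp 2 (P *ᵥ y)⟫ = ⟪y, WithLp.toLp 2 (P *ᵥ x)⟫ := by
  rw [real_inner_comm, inner_toLp_mulVec_left, hP.eq]

theorem IsSymm.two_mul_inner_toLp_mulVec_of_lyapunov {A P Q : Matrix ι ι ℝ} (hP : P.IsSymm)
    (hLyap : Aᵀ * P + P * A = -Q) (x : EuclideanSpace ℝ ι) :
    2 * ⟪WithLp.toLp 2 (A *ᵥ x), WithLp.toLp 2 (P *ᵥ x)⟫ = -⟪x, WithLp.toLp 2 (Q *ᵥ x)⟫ := by
  have hAP : ⟪WithLp.toLp 2 (A *ᵥ x), WithLp.toLp 2 (P *ᵥ x)⟫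
      = ⟪x, WithLp.toLp 2 ((Aᵀ * P) *ᵥ x)⟫ := by
    rw [inner_toLp_mulVec_left, WithLp.ofLp_toLp, mulVec_mulVec]
  have hPA : ⟪WithLp.toLp 2 (A *ᵥ x), WithLp.toLp 2 (P *ᵥ x)⟫
      = ⟪x, WithLp.toLp 2 ((P * A) *ᵥ x)⟫ := by
    rw [real_inner_comm, inner_toLp_mulVec_left, WithLp.ofLp_toLp, hP.eq, mulVec_mulVec]
  calc 2 * ⟪WithLp.toLp 2 (A *ᵥ x), WithLp.toLp 2 (P *ᵥ x)⟫
      = ⟪x, WithLp.toLp 2 ((Aᵀ * P + P * A) *ᵥ x)⟫ := by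
        rw [two_mul, add_mulVec, WithLp.toLp_add, inner_add_right, ← hAP, ← hPA]
    _ = -⟪x, WithLp.toLp 2 (Q *ᵥ x)⟫ := by
        rw [hLyap, neg_mulVec, WithLp.toLp_neg, inner_neg_right]

theorem IsSymm.hasDerivAt_inner_toLp_mulVec_self [DecidableEq ι] {P : Matrix ι ι ℝ}
    (hP : P.IsSymm) {x : ℝ → EuclideanSpace ℝ ι} {x' : EuclideanSpace ℝ ι} {t : ℝ}
    (hx : HasDerivAt x x' t) :
    HasDerivAt (fun s ↦ ⟪x s, WithLp.toLp 2 (P *ᵥ x s)⟫)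
      (2 * ⟪x', WithLp.toLp 2 (P *ᵥ x t)⟫) t := by
  have hPx : HasDerivAt (fun s ↦ WithLp.toLp 2 (P *ᵥ x s)) (WithLp.toLp 2 (P *ᵥ x')) t :=
    (toEuclideanLin P).toContinuousLinearMap.hasFDerivAt.comp_hasDerivAt t hx
  have h := hx.inner ℝ hPx
  rwa [hP.inner_toLp_mulVec_comm (x t), ← two_mul] at h

end Matrix

theorem antitoneOn_Ici_of_hasDerivAt_nonpos {f f' : ℝ → ℝ} {a : ℝ}
    (hf : ∀ t ≥ a, HasDerivAt f (f' t) t) (hf' : ∀ t ≥ a, f' t ≤ 0) :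
    AntitoneOn f (Set.Ici a) := by
  refine antitoneOn_of_hasDerivWithinAt_nonpos (f' := f') (convex_Ici a)
    (fun t ht ↦ (hf t ht).continuousAt.continuousWithinAt) (fun t ht ↦ ?_) (fun t ht ↦ ?_)
  all_goals rw [interior_Ici] at ht
  · exact (hf t (le_of_lt ht)).hasDerivWithinAt
  · exact hf' t (le_of_lt ht)

theorem adaptive_lyapunov_derivative_nonpos {ι κ ρ : Type*} [Fintype ι] [Fintype κ] [Fintype ρ]
    {A P Q : Matrix ι ι ℝ} (hP : P.IsSymm) (hLyap : Aᵀ * P + P * A = -Q)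
    {B : Matrix ι κ ℝ} {Φ : Matrix κ ρ ℝ} {γ : ℝ} (hγ : 0 < γ)
    {e e' : EuclideanSpace ℝ ι} {θ θ' : EuclideanSpace ℝ ρ}
    (hQ : 0 ≤ ⟪e, WithLp.toLp 2 (Q *ᵥ e)⟫)
    (hdyn : e'.ofLp = A *ᵥ e + B *ᵥ (Φ *ᵥ θ))
    (hadapt : ⟪θ, θ'⟫ ≤ -γ * ⟪θ, WithLp.toLp 2 ((Φᵀ * Bᵀ * P) *ᵥ e)⟫) :
    2 * ⟪e', WithLp.toLp 2 (P *ᵥ e)⟫ + 2 * ⟪θ, θ'⟫ / γ ≤ 0 := by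
  have hcross : ⟪WithLp.toLp 2 (B *ᵥ (Φ *ᵥ θ)), WithLp.toLp 2 (P *ᵥ e)⟫
      = ⟪θ, WithLp.toLp 2 ((Φᵀ * Bᵀ * P) *ᵥ e)⟫ := by
    rw [Matrix.mulVec_mulVec, Matrix.inner_toLp_mulVec_left, WithLp.ofLp_toLp,
      Matrix.mulVec_mulVec, Matrix.transpose_mul]
  have hstate : 2 * ⟪e', WithLp.toLp 2 (P *ᵥ e)⟫
      = -⟪e, WithLp.toLp 2 (Q *ᵥ e)⟫ + 2 * ⟪θ, WithLp.toLp 2 ((Φᵀ * Bᵀ * P) *ᵥ e)⟫ := by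
    rw [← WithLp.toLp_ofLp (p := 2) e', hdyn, WithLp.toLp_add, inner_add_left, mul_add,
      hP.two_mul_inner_toLp_mulVec_of_lyapunov hLyap, hcross]
  have hparam : 2 * ⟪θ, θ'⟫ / γ ≤ -2 * ⟪θ, WithLp.toLp 2 ((Φᵀ * Bᵀ * P) *ᵥ e)⟫ := by
    rw [div_le_iff₀ hγ]
    linarith
  linarith

/-- claims (a)–(b) of Theorem 1. Along trajectories of the adaptive error
model with a parameter adaptive law satisfying the tangent-cone projection inequality, the
Lyapunov function `V = eᵀPe + ‖θ̃‖²/γ` is nonincreasing on `[0, ∞)` and the tracking error is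
bounded by `√(V(0)/λ_min(P))`. -/
theorem lyapunov_nonincreasing_error_bounded
    {n m p : ℕ} (Am P Q : Matrix (Fin n) (Fin n) ℝ) (hP : P.IsSymm)
    (hLyap : Amᵀ * P + P * Am = -Q)
    (hQ : ∀ x : EuclideanSpace ℝ (Fin n), 0 ≤ ⟪x, WithLp.toLp 2 (Q.mulVec x)⟫)
    (B : Matrix (Fin n) (Fin m) ℝ) (γ : ℝ) (hγ : 0 < γ)
    (Φ : ℝ → Matrix (Fin m) (Fin p) ℝ)
    (e : ℝ → EuclideanSpace ℝ (Fin n)) (θ : ℝ → EuclideanSpace ℝ (Fin p))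
    (he : Differentiable ℝ e) (hθ : Differentiable ℝ θ)
    (hdyn : ∀ t ≥ (0:ℝ),
      deriv e t = Am.mulVec (e t) + B.mulVec ((Φ t).mulVec (θ t)))
    (hadapt : ∀ t ≥ (0:ℝ),
      ⟪θ t, deriv θ t⟫ ≤ -γ * ⟪θ t, WithLp.toLp 2 (((Φ t)ᵀ * Bᵀ * P).mulVec (e t))⟫)
    (V : ℝ → ℝ)
    (hV : ∀ t, V t = ⟪e t, WithLp.toLp 2 (P.mulVec (e t))⟫ + ‖θ t‖ ^ 2 / γ) :
    (∀ s t : ℝ, 0 ≤ s → s ≤ t → V t ≤ V s) ∧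
    (∀ μ : ℝ, 0 < μ →
      (∀ x : EuclideanSpace ℝ (Fin n), μ * ‖x‖ ^ 2 ≤ ⟪x, WithLp.toLp 2 (P.mulVec x)⟫) →
      ∀ t ≥ (0:ℝ), ‖e t‖ ^ 2 ≤ V 0 / μ) := by
  have hVderiv : ∀ t, HasDerivAt V
      (2 * ⟪deriv e t, WithLp.toLp 2 (P *ᵥ e t)⟫ + 2 * ⟪θ t, deriv θ t⟫ / γ) t := by
    intro t
    rw [funext hV]
    exact (hP.hasDerivAt_inner_toLp_mulVec_self (he t).hasDerivAt).add
      ((hθ t).hasDerivAt.norm_sq.div_const γ)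
  have hanti : AntitoneOn V (Set.Ici 0) :=
    antitoneOn_Ici_of_hasDerivAt_nonpos (fun t _ ↦ hVderiv t) fun t ht ↦
      adaptive_lyapunov_derivative_nonpos hP hLyap hγ (hQ _) (hdyn t ht) (hadapt t ht)
  refine ⟨fun s t hs hst ↦ hanti hs (hs.trans hst) hst, fun μ hμ hPμ t ht ↦ ?_⟩
  have hθnonneg : 0 ≤ ‖θ t‖ ^ 2 / γ := by positivity
  have hVt : V t ≤ V 0 := hanti Set.self_mem_Ici ht ht
  rw [le_div_iff₀' hμ]
  linarith [hPμ (e t), hV t]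
end

section
/- Let h : ℝ^n → ℝ be differentiable, let W be a linear subspace of ℝ^n such that the gradient of h at every point of ℝ^n lies in W, and let Π denote the orthogonal projection of ℝ^n onto W. Let 𝒞 ⊆ ℝ^n be a convex set and κ ≥ 0 a real number such that ‖∇h(x)‖ ≤ κ for every x ∈ 𝒞. Then for all x₁, x₂ ∈ 𝒞, |h(x₁) - h(x₂)| ≤ κ·‖Π(x₁ - x₂)‖. -/
/-!
Along the segment from `x₂` to `x₁` the derivative of `h` is `⟪∇h, x₁ - x₂⟫`. Since `∇h ∈ W`, the
component of `x₁ - x₂` orthogonal to `W` does not contribute, so this equals `⟪∇h, Π(x₁ - x₂)⟫`,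
which Cauchy–Schwarz bounds by `κ ‖Π(x₁ - x₂)‖`; the mean value inequality on the segment concludes.
-/

open Set

theorem Convex.norm_image_sub_le_of_norm_hasFDerivWithin_apply_le
    {E G : Type*} [NormedAddCommGroup E] [NormedSpace ℝ E] [NormedAddCommGroup G]
    [NormedSpace ℝ G] {f : E → G} {f' : E → E →L[ℝ] G} {s : Set E} {x y : E} {C : ℝ}
    (hs : Convex ℝ s) (hf : ∀ z ∈ s, HasFDerivWithinAt f (f' z) s z)
    (bound : ∀ z ∈ s, ‖f' z (y - x)‖ ≤ C) (xs : x ∈ s) (ys : y ∈ s) :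
    ‖f y - f x‖ ≤ C := by
  have segm : MapsTo (AffineMap.lineMap x y : ℝ → E) (Icc 0 1) s := hs.mapsTo_lineMap xs ys
  have hD : ∀ t ∈ Icc (0 : ℝ) 1, HasDerivWithinAt (f ∘ AffineMap.lineMap x y)
      (f' (AffineMap.lineMap x y t) (y - x)) (Icc 0 1) t := fun t ht =>
    (hf _ (segm ht)).comp_hasDerivWithinAt t AffineMap.hasDerivWithinAt_lineMap segm
  simpa using norm_image_sub_le_of_norm_deriv_le_segment_01' hD
    fun t ht => bound _ (segm (Ico_subset_Icc_self ht))

theorem Submodule.inner_starProjection_right_of_mem {𝕜 E : Type*} [RCLike 𝕜]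
    [NormedAddCommGroup E] [InnerProductSpace 𝕜 E] (K : Submodule 𝕜 E)
    [K.HasOrthogonalProjection] {w : E} (hw : w ∈ K) (v : E) :
    inner 𝕜 w (K.starProjection v) = inner 𝕜 w v := by
  rw [← K.inner_starProjection_left_eq_right, K.starProjection_eq_self_iff.2 hw]

theorem Convex.abs_sub_le_mul_norm_starProjection_of_hasGradientWithinAt
    {E : Type*} [NormedAddCommGroup E] [InnerProductSpace ℝ E] [CompleteSpace E]
    {f : E → ℝ} {f' : E → E} {s : Set E} (K : Submodule ℝ E) [K.HasOrthogonalProjection]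
    {C : ℝ} (hs : Convex ℝ s)
    (hf : ∀ z ∈ s, HasGradientWithinAt f (f' z) s z) (hK : ∀ z ∈ s, f' z ∈ K)
    (bound : ∀ z ∈ s, ‖f' z‖ ≤ C) {x y : E} (xs : x ∈ s) (ys : y ∈ s) :
    |f x - f y| ≤ C * ‖K.starProjection (x - y)‖ := by
  refine hs.norm_image_sub_le_of_norm_hasFDerivWithin_apply_le hf (fun z zs => ?_) ys xs
  rw [InnerProductSpace.toDual_apply_apply, ← K.inner_starProjection_right_of_mem (hK z zs)]
  exact (norm_inner_le_norm _ _).trans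
    (mul_le_mul_of_nonneg_right (bound z zs) (norm_nonneg _))

theorem abs_sub_le_of_gradient_mem_subspace_general
    {n : ℕ} (h : EuclideanSpace ℝ (Fin n) → ℝ) (hdiff : Differentiable ℝ h)
    (W : Submodule ℝ (EuclideanSpace ℝ (Fin n)))
    (hgrad : ∀ x, gradient h x ∈ W)
    (C : Set (EuclideanSpace ℝ (Fin n))) (hC : Convex ℝ C)
    (κ : ℝ)
    (hbound : ∀ x ∈ C, ‖gradient h x‖ ≤ κ) :
    ∀ x₁ ∈ C, ∀ x₂ ∈ C,
      |h x₁ - h x₂| ≤ κ * ‖(W.orthogonalProjectionOnto (x₁ - x₂) : EuclideanSpace ℝ (Fin n))‖ :=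
  fun _ h₁ _ h₂ => hC.abs_sub_le_mul_norm_starProjection_of_hasGradientWithinAt W
    (fun z _ => HasFDerivAt.hasFDerivWithinAt (hdiff z).hasGradientAt)
    (fun z _ => hgrad z) hbound h₁ h₂

/-- Lemma 3 of the paper. If the gradient of `h` always lies in a subspace
`W` and is bounded by `κ` on a convex set `𝒞`, then `h` satisfies a Lipschitz-type bound along
the orthogonal projection onto `W`. -/
theorem abs_sub_le_of_gradient_mem_subspace
    {n : ℕ} (h : EuclideanSpace ℝ (Fin n) → ℝ) (hdiff : Differentiable ℝ h)
    (W : Submodule ℝ (EuclideanSpace ℝ (Fin n)))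
    (hgrad : ∀ x, gradient h x ∈ W)
    (C : Set (EuclideanSpace ℝ (Fin n))) (hC : Convex ℝ C)
    (κ : ℝ) (hκ : 0 ≤ κ)
    (hbound : ∀ x ∈ C, ‖gradient h x‖ ≤ κ) :
    ∀ x₁ ∈ C, ∀ x₂ ∈ C,
      |h x₁ - h x₂| ≤ κ * ‖(W.orthogonalProjectionOnto (x₁ - x₂) : EuclideanSpace ℝ (Fin n))‖ :=
  abs_sub_le_of_gradient_mem_subspace_general h hdiff W hgrad C hC κ hbound
end

section
/- Let A_m be a real n×n matrix, B a real n×m matrix, r ≥ 2 a natural number, and α : ℕ → ℝ any sequence of real numbers. Let W : ℕ → (n×n real matrices) satisfy the recursion W_i = (α_1 + α_i)·W_{i-1} + A_mᵀ·W_{i-1} + W_{i-1}·A_m for all i ≥ 1. Suppose that W_0·A_m^j·B = 0 (the zero n×m matrix) for every natural number j with 0 ≤ j ≤ r-2. Then W_i·B = 0 for every natural number i with 0 ≤ i ≤ r-2. -/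
open scoped Matrix

/-- Lemma 4 of the paper. The matrices generated by the recursion
`W_i = (α₁ + α_i)·W_{i-1} + A_mᵀ·W_{i-1} + W_{i-1}·A_m` satisfy `W_i·B = 0` for all
`i ≤ r - 2`, given `W₀·A_m^j·B = 0` for all `j ≤ r - 2`. -/
theorem matrix_recursion_mul_eq_zero
    {n m : ℕ} (Am : Matrix (Fin n) (Fin n) ℝ) (B : Matrix (Fin n) (Fin m) ℝ)
    (r : ℕ) (hr : 2 ≤ r) (α : ℕ → ℝ)
    (W : ℕ → Matrix (Fin n) (Fin n) ℝ)
    (hrec : ∀ i : ℕ, 1 ≤ i →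
      W i = (α 1 + α i) • W (i - 1) + Amᵀ * W (i - 1) + W (i - 1) * Am)
    (h0 : ∀ j : ℕ, j ≤ r - 2 → W 0 * Am ^ j * B = 0) :
    ∀ i : ℕ, i ≤ r - 2 → W i * B = 0 := by
  have key : ∀ i j : ℕ, i + j ≤ r - 2 → W i * Am ^ j * B = 0 := by
    intro i
    induction i with
    | zero => intro j hj; exact h0 j (by omega)
    | succ k ih =>
      intro j hj
      rw [hrec (k + 1) (by omega)]
      simp only [Nat.add_sub_cancel]
      have h1 : W k * Am ^ j * B = 0 := ih j (by omega)
      have h2 : W k * Am ^ (j + 1) * B = 0 := ih (j + 1) (by omega)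
      have h3 : W k * Am * Am ^ j * B = 0 := by
        rw [show W k * Am * Am ^ j = W k * Am ^ (j + 1) by
          rw [pow_succ', ← mul_assoc]]
        exact h2
      simp only [Matrix.add_mul, Matrix.smul_mul, mul_assoc] at h1 h3 ⊢
      rw [h1, h3]
      simp only [add_zero, smul_zero, zero_add]
      rw [Matrix.mul_assoc, Matrix.mul_assoc, ← Matrix.mul_assoc (W k), h1, Matrix.mul_zero]
  intro i hi
  have := key i 0 (by omega)
  simpa using this
end

section
/- Let r ≥ 1 be a natural number, let α_1, …, α_r be positive real numbers, and let H_1, …, H_r : ℝ → ℝ be differentiable functions such that: (i) for every i with 1 ≤ i ≤ r-1 and every t ≥ 0, H_i'(t) = H_{i+1}(t) - α_i·H_i(t); (ii) for every t ≥ 0, H_r'(t) ≥ -α_r·H_r(t); and (iii) H_i(0) ≥ 0 for every 1 ≤ i ≤ r. Then H_i(t) ≥ 0 for every 1 ≤ i ≤ r and every t ≥ 0. -/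
/-!
If `f' ≥ -a f` on `t ≥ 0`, then `exp (a t) f t` has derivative `exp (a t) (f' t + a f t) ≥ 0`
there, so it is monotone and `f` keeps the sign of `f 0`. The last function `H r` satisfies this
inequality by assumption; once `H (i + 1) ≥ 0` is known, the equation
`H i' = H (i + 1) - α i H i` gives it for `H i`, so the sign propagates down the cascade.
-/

open Set

theorem monotoneOn_exp_mul_of_neg_mul_le_deriv {f : ℝ → ℝ} {a : ℝ}
    (hf : Differentiable ℝ f) (hd : ∀ t ≥ (0:ℝ), -a * f t ≤ deriv f t) :
    MonotoneOn (fun t => Real.exp (a * t) * f t) (Ici 0) := by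
  have hderiv : ∀ t, HasDerivAt (fun t => Real.exp (a * t) * f t)
      (Real.exp (a * t) * (deriv f t + a * f t)) t := fun t =>
    (((hasDerivAt_id t).const_mul a).exp.mul (hf t).hasDerivAt).congr_deriv
      (by simp only [id, mul_one]; ring)
  refine monotoneOn_of_deriv_nonneg (convex_Ici 0)
    (fun t _ => (hderiv t).continuousAt.continuousWithinAt)
    (fun t _ => (hderiv t).differentiableAt.differentiableWithinAt) fun t ht => ?_
  rw [interior_Ici] at ht
  rw [(hderiv t).deriv]
  exact mul_nonneg (Real.exp_pos _).le (by linarith [hd t ht.le])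

theorem nonneg_of_neg_mul_le_deriv {f : ℝ → ℝ} {a : ℝ} (hf : Differentiable ℝ f)
    (hd : ∀ t ≥ (0:ℝ), -a * f t ≤ deriv f t) (h0 : 0 ≤ f 0) :
    ∀ t ≥ (0:ℝ), 0 ≤ f t := fun t ht => by
  have hmono := monotoneOn_exp_mul_of_neg_mul_le_deriv hf hd self_mem_Ici (mem_Ici.2 ht) ht
  simp only [mul_zero, Real.exp_zero, one_mul] at hmono
  exact (mul_nonneg_iff_of_pos_left (Real.exp_pos _)).1 (h0.trans hmono)

theorem cascade_nonneg_general
    (r : ℕ) (α : ℕ → ℝ)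
    (H : ℕ → ℝ → ℝ) (hdiff : ∀ i, 1 ≤ i → i ≤ r → Differentiable ℝ (H i))
    (hcasc : ∀ i, 1 ≤ i → i ≤ r - 1 → ∀ t ≥ (0:ℝ),
      deriv (H i) t = H (i + 1) t - α i * H i t)
    (hlast : ∀ t ≥ (0:ℝ), deriv (H r) t ≥ -α r * H r t)
    (h0 : ∀ i, 1 ≤ i → i ≤ r → 0 ≤ H i 0) :
    ∀ i, 1 ≤ i → i ≤ r → ∀ t ≥ (0:ℝ), 0 ≤ H i t := by
  intro i hi hir
  induction hir using Nat.decreasingInduction with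
  | self => exact nonneg_of_neg_mul_le_deriv (hdiff r hi le_rfl) hlast (h0 r hi le_rfl)
  | of_succ k hkr hnext =>
    refine nonneg_of_neg_mul_le_deriv (a := α k) (hdiff k hi hkr.le) (fun t ht => ?_)
      (h0 k hi hkr.le)
    rw [hcasc k hi (by omega) t ht]
    linarith [hnext (by omega) t ht]

/-- Proposition 1 of the paper. The cascade of high-order CBF comparison
inequalities propagates nonnegativity of all `H_i` forward in time. -/
theorem cascade_nonneg
    (r : ℕ) (hr : 1 ≤ r) (α : ℕ → ℝ) (hα : ∀ i, 1 ≤ i → i ≤ r → 0 < α i)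
    (H : ℕ → ℝ → ℝ) (hdiff : ∀ i, 1 ≤ i → i ≤ r → Differentiable ℝ (H i))
    (hcasc : ∀ i, 1 ≤ i → i ≤ r - 1 → ∀ t ≥ (0:ℝ),
      deriv (H i) t = H (i + 1) t - α i * H i t)
    (hlast : ∀ t ≥ (0:ℝ), deriv (H r) t ≥ -α r * H r t)
    (h0 : ∀ i, 1 ≤ i → i ≤ r → 0 ≤ H i 0) :
    ∀ i, 1 ≤ i → i ≤ r → ∀ t ≥ (0:ℝ), 0 ≤ H i t :=
  cascade_nonneg_general r α H hdiff hcasc hlast h0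
end

section
/- Let V : ℝ → ℝ and e : ℝ → ℝ^n be differentiable functions, and let c > 0 and M ≥ 0 be real numbers such that for all t ≥ 0: V(t) ≥ 0, V'(t) ≤ -c·‖e(t)‖², and ‖e'(t)‖ ≤ M. Then e(t) → 0 as t → ∞ (i.e., e tends to 0 along the filter atTop). -/
/-!
Since `V' ≤ -c‖e‖² ≤ 0`, `V` decreases on `[0, ∞)` and, being nonnegative, converges; hence
`c ∫_t^{t+δ} ‖e‖² ≤ V t - V (t + δ) → 0` for every window length `δ`. The bound on `e'` makes `e`
Lipschitz, so if `‖e t‖ ≥ ε` at arbitrarily late times, then `‖e‖ ≥ ε / 2` on a window of fixed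
length after each of them, and these windows carry a fixed positive amount of `∫ ‖e‖²`.
-/

open Filter MeasureTheory Set Topology
open scoped NNReal

theorem AntitoneOn.exists_tendsto_atTop_of_bddBelow {α β : Type*} [LinearOrder α]
    [ConditionallyCompleteLinearOrder β] [TopologicalSpace β] [OrderTopology β]
    {f : α → β} {a : α} (hf : AntitoneOn f (Ici a)) (hbdd : BddBelow (f '' Ici a)) :
    ∃ L, Tendsto f atTop (𝓝 L) := by
  have hanti : Antitone fun t => f (max a t) := fun s t hst =>
    hf (le_max_left a s) (le_max_left a t) (max_le_max_left a hst)
  have hbdd' : BddBelow (range fun t => f (max a t)) :=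
    hbdd.mono (range_subset_iff.2 fun t => mem_image_of_mem f (le_max_left a t))
  refine ⟨_, (tendsto_atTop_ciInf hanti hbdd').congr' ?_⟩
  filter_upwards [eventually_ge_atTop a] with t ht
  rw [max_eq_right ht]

theorem integral_le_sub_of_deriv_le_neg {V f : ℝ → ℝ} {a b : ℝ} (hab : a ≤ b)
    (hV : ∀ x ∈ Icc a b, DifferentiableAt ℝ V x) (hf : IntegrableOn f (Icc a b))
    (hVf : ∀ x ∈ Ioo a b, deriv V x ≤ -f x) :
    ∫ x in a..b, f x ≤ V a - V b := by
  have := intervalIntegral.integral_le_sub_of_hasDeriv_right_of_le hab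
    (fun x hx => (hV x hx).continuousAt.neg.continuousWithinAt)
    (fun x hx => (hV x (Ioo_subset_Icc_self hx)).hasDerivAt.neg.hasDerivWithinAt) hf
    (fun x hx => le_neg_of_le_neg (hVf x hx))
  simp only [Pi.neg_apply] at this
  linarith

variable {E : Type*} [NormedAddCommGroup E]

theorem mul_sq_le_integral_sq_norm_of_lipschitzOnWith {e : ℝ → E} {K : ℝ≥0} {t δ r : ℝ}
    (hδ : 0 ≤ δ) (hr : 0 ≤ r) (he : LipschitzOnWith K e (Icc t (t + δ)))
    (hrt : r + K * δ ≤ ‖e t‖) :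
    δ * r ^ 2 ≤ ∫ s in t..t + δ, ‖e s‖ ^ 2 := by
  have hlow : ∀ s ∈ Icc t (t + δ), r ≤ ‖e s‖ := fun s hs => by
    have hts : ‖e t - e s‖ ≤ K * δ := by
      calc ‖e t - e s‖ ≤ K * dist t s := by
            simpa [← dist_eq_norm] using
              he.dist_le_mul t (left_mem_Icc.2 (by linarith)) s hs
        _ ≤ K * δ := by
          gcongr
          rw [Real.dist_eq, abs_sub_comm, abs_of_nonneg (by linarith [hs.1])]
          linarith [hs.2]
    linarith [norm_sub_norm_le (e t) (e s)]
  have hcont : ContinuousOn (fun s => ‖e s‖ ^ 2) (uIcc t (t + δ)) := by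
    rw [uIcc_of_le (by linarith)]
    exact (he.continuousOn.norm).pow 2
  calc δ * r ^ 2 = ∫ _ in t..t + δ, r ^ 2 := by simp
    _ ≤ ∫ s in t..t + δ, ‖e s‖ ^ 2 :=
      intervalIntegral.integral_mono_on (by linarith) intervalIntegrable_const
        hcont.intervalIntegrable fun s hs => pow_le_pow_left₀ hr (hlow s hs) 2

theorem tendsto_zero_of_lipschitzOnWith_of_integral_sq_norm {e : ℝ → E} {K : ℝ≥0} {a : ℝ}
    (he : LipschitzOnWith K e (Ici a))
    (hint : ∀ δ > 0, Tendsto (fun t => ∫ s in t..t + δ, ‖e s‖ ^ 2) atTop (𝓝 0)) :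
    Tendsto e atTop (𝓝 0) := by
  rw [tendsto_zero_iff_norm_tendsto_zero]
  refine tendsto_order.2 ⟨fun ε hε => Eventually.of_forall fun t => hε.trans_le (norm_nonneg _),
    fun ε hε => ?_⟩
  -- `δ` is chosen so that `‖e‖` cannot drop from `ε` below `ε / 2` within time `δ`.
  set δ : ℝ := ε / (2 * (K + 1))
  have hδ : 0 < δ := by positivity
  have hKδ : K * δ ≤ ε / 2 := by
    calc (K : ℝ) * δ ≤ (K + 1) * δ := by gcongr; linarith
      _ = ε / 2 := by simp only [δ]; field_simp
  filter_upwards [eventually_ge_atTop a,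
    (hint δ hδ).eventually (gt_mem_nhds (by positivity : 0 < δ * (ε / 2) ^ 2))] with t hat hsmall
  by_contra! hεt
  have := mul_sq_le_integral_sq_norm_of_lipschitzOnWith hδ.le (by positivity : 0 ≤ ε / 2)
    (he.mono (Icc_subset_Ici_iff (by linarith) |>.2 hat)) (by linarith)
  linarith

theorem tendsto_zero_of_lyapunov_barbalat_general
    {n : ℕ} (V : ℝ → ℝ) (e : ℝ → EuclideanSpace ℝ (Fin n))
    (hV : Differentiable ℝ V) (he : Differentiable ℝ e)
    (c M : ℝ) (hc : 0 < c)
    (hVnonneg : ∀ t ≥ (0:ℝ), 0 ≤ V t)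
    (hVder : ∀ t ≥ (0:ℝ), deriv V t ≤ -c * ‖e t‖ ^ 2)
    (heder : ∀ t ≥ (0:ℝ), ‖deriv e t‖ ≤ M) :
    Filter.Tendsto e Filter.atTop (nhds 0) := by
  have hLip : LipschitzOnWith M.toNNReal e (Ici 0) :=
    (convex_Ici 0).lipschitzOnWith_of_nnnorm_deriv_le (fun t _ => he t) fun t ht => by
      rw [← NNReal.coe_le_coe, coe_nnnorm]
      exact (heder t ht).trans M.le_coe_toNNReal
  have hwindow : ∀ a b, 0 ≤ a → a ≤ b → c * ∫ s in a..b, ‖e s‖ ^ 2 ≤ V a - V b := by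
    intro a b ha hab
    rw [← intervalIntegral.integral_const_mul]
    refine integral_le_sub_of_deriv_le_neg hab (fun t _ => hV t)
      (Continuous.integrableOn_Icc (by have := he.continuous; fun_prop)) fun t ht => ?_
    simpa only [neg_mul] using hVder t (ha.trans ht.1.le)
  have hVanti : AntitoneOn V (Ici 0) := fun a ha b _ hab => by
    have : 0 ≤ ∫ s in a..b, ‖e s‖ ^ 2 :=
      intervalIntegral.integral_nonneg hab fun s _ => sq_nonneg ‖e s‖
    nlinarith [hwindow a b (mem_Ici.1 ha) hab]
  obtain ⟨L, hL⟩ := hVanti.exists_tendsto_atTop_of_bddBelow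
    ⟨0, by rintro _ ⟨t, ht, rfl⟩; exact hVnonneg t ht⟩
  refine tendsto_zero_of_lipschitzOnWith_of_integral_sq_norm hLip fun δ hδ => ?_
  have hdrop : Tendsto (fun t => (V t - V (t + δ)) / c) atTop (𝓝 0) := by
    simpa using (hL.sub (hL.comp (tendsto_atTop_add_const_right _ δ tendsto_id))).div_const c
  refine tendsto_of_tendsto_of_tendsto_of_le_of_le' tendsto_const_nhds hdrop
    (Eventually.of_forall fun t =>
      intervalIntegral.integral_nonneg (by linarith) fun s _ => sq_nonneg ‖e s‖) ?_
  filter_upwards [eventually_ge_atTop 0] with t ht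
  rw [le_div_iff₀ hc, mul_comm]
  exact hwindow t (t + δ) ht (by linarith)

/-- Barbalat-type argument for claim (d) of Theorem 1 and claim (e) of
Theorem 3. A nonnegative function `V` whose derivative is bounded above by `-c‖e‖²`, together
with a uniformly bounded derivative of `e`, forces `e(t) → 0` as `t → ∞`. -/
theorem tendsto_zero_of_lyapunov_barbalat
    {n : ℕ} (V : ℝ → ℝ) (e : ℝ → EuclideanSpace ℝ (Fin n))
    (hV : Differentiable ℝ V) (he : Differentiable ℝ e)
    (c M : ℝ) (hc : 0 < c) (hM : 0 ≤ M)
    (hVnonneg : ∀ t ≥ (0:ℝ), 0 ≤ V t)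
    (hVder : ∀ t ≥ (0:ℝ), deriv V t ≤ -c * ‖e t‖ ^ 2)
    (heder : ∀ t ≥ (0:ℝ), ‖deriv e t‖ ≤ M) :
    Filter.Tendsto e Filter.atTop (nhds 0) :=
  tendsto_zero_of_lyapunov_barbalat_general V e hV he c M hc hVnonneg hVder heder
end

section
/- Let A_m, P, Q be real n×n matrices with P symmetric, A_mᵀP + P·A_m = -Q, and ⟪x, Q·x⟫ ≥ 0 for every x ∈ ℝ^n. Let B be a real n×m matrix, γ_θ > 0 and γ_λ > 0 real numbers, Φ : ℝ → (m×p real matrices) and u : ℝ → ℝ^m any functions. Let e : ℝ → ℝ^n, θ̃ : ℝ → ℝ^p, and λ̃ : ℝ → ℝ^m be differentiable functions such that for all t ≥ 0: (i) e'(t) = A_m·e(t) + B·(Φ(t)·θ̃(t) - diag(λ̃(t))·u(t)), (ii) ⟪θ̃(t), θ̃'(t)⟫ ≤ -γ_θ·⟪θ̃(t), Φ(t)ᵀ·Bᵀ·P·e(t)⟫, and (iii) ⟪λ̃(t), λ̃'(t)⟫ ≤ γ_λ·⟪λ̃(t), diag(u(t))·Bᵀ·P·e(t)⟫. Define V(t)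 = ⟪e(t), P·e(t)⟫ + ‖θ̃(t)‖²/γ_θ + ‖λ̃(t)‖²/γ_λ. Then V(t) ≤ V(s) for all 0 ≤ s ≤ t; moreover, if μ > 0 satisfies ⟪x, P·x⟫ ≥ μ·‖x‖² for all x, then ‖e(t)‖² ≤ V(0)/μ for all t ≥ 0. -/
/-!
Along a trajectory, `V' = 2⟪e, P e'⟫ + 2⟪θ̃, θ̃'⟫/γ_θ + 2⟪λ̃, λ̃'⟫/γ_λ`. Substituting the error
dynamics, the Lyapunov equation turns the `A_m` part into `-⟪e, Q e⟫`, and transposing `P B`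
(together with `diag(λ̃) u = diag(u) λ̃`) writes the uncertainty part as
`2⟪θ̃, Φᵀ Bᵀ P e⟫ - 2⟪λ̃, diag(u) Bᵀ P e⟫`, which the adaptation laws dominate.
Hence `V' ≤ -⟪e, Q e⟫ ≤ 0` on `[0, ∞)`, so `V` is antitone there by the mean value theorem, and
`μ ‖e(t)‖² ≤ V(t) ≤ V(0)`.
-/

open scoped RealInnerProductSpace Matrix
open WithLp (toLp ofLp)

namespace Matrix
variable {ι κ ν R : Type*} [Fintype ι] [Fintype κ] [CommRing R]

theorem two_mul_dotProduct_mulVec_of_lyapunov {A P Q : Matrix ι ι R} (hP : P.IsSymm)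
    (h : Aᵀ * P + P * A = -Q) (x : ι → R) :
    2 * (x ⬝ᵥ P *ᵥ A *ᵥ x) = -(x ⬝ᵥ Q *ᵥ x) := by
  have hsym : x ⬝ᵥ (P * A) *ᵥ x = x ⬝ᵥ (Aᵀ * P) *ᵥ x := by
    rw [← dotProduct_transpose_mulVec, transpose_mul, hP.eq]
  rw [mulVec_mulVec, two_mul]
  nth_rewrite 1 [hsym]
  rw [← dotProduct_add, ← add_mulVec, h, neg_mulVec, dotProduct_neg]

theorem diagonal_mulVec_comm [DecidableEq ι] (v w : ι → R) :
    diagonal v *ᵥ w = diagonal w *ᵥ v := by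
  ext i; simp only [mulVec_diagonal, mul_comm]

theorem dotProduct_mulVec_mulVec_sub_diagonal_mulVec [Fintype ν] [DecidableEq κ]
    {P : Matrix ι ι R} (hP : P.IsSymm) (B : Matrix ι κ R) (Φ : Matrix κ ν R) (x : ι → R) (θ : ν → R)
    (l u : κ → R) :
    x ⬝ᵥ P *ᵥ B *ᵥ (Φ *ᵥ θ - diagonal l *ᵥ u)
      = θ ⬝ᵥ (Φᵀ * Bᵀ * P) *ᵥ x - l ⬝ᵥ (diagonal u * Bᵀ * P) *ᵥ x := by
  rw [diagonal_mulVec_comm, mulVec_mulVec, ← dotProduct_transpose_mulVec (P * B),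
    transpose_mul, hP.eq, sub_dotProduct, dotProduct_comm, ← dotProduct_transpose_mulVec Φ,
    dotProduct_comm (_ *ᵥ l), ← dotProduct_transpose_mulVec (diagonal u), diagonal_transpose,
    mulVec_mulVec, mulVec_mulVec, Matrix.mul_assoc, Matrix.mul_assoc]

end Matrix

section EuclideanSpace
variable {ι κ ν : Type*} [Fintype ι] [Fintype κ] [Fintype ν]

theorem EuclideanSpace.real_inner_toLp (x : EuclideanSpace ℝ ι) (v : ι → ℝ) :
    ⟪x, toLp 2 v⟫ = ofLp x ⬝ᵥ v := by
  rw [inner_eq_star_dotProduct, star_trivial, dotProduct_comm]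

theorem HasDerivAt.inner_toLp_mulVec_self [DecidableEq ι] {P : Matrix ι ι ℝ} (hP : P.IsSymm)
    {f : ℝ → EuclideanSpace ℝ ι} {f' : EuclideanSpace ℝ ι} {t : ℝ} (hf : HasDerivAt f f' t) :
    HasDerivAt (fun s => ⟪f s, toLp 2 (P *ᵥ f s)⟫) (2 * ⟪f t, toLp 2 (P *ᵥ f')⟫) t := by
  have hPf : HasDerivAt (fun s => toLp 2 (P *ᵥ f s)) (toLp 2 (P *ᵥ f')) t :=
    (Matrix.toEuclideanCLM (𝕜 := ℝ) P).hasFDerivAt.comp_hasDerivAt t hf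
  refine (hf.inner ℝ hPf).congr_deriv ?_
  rw [EuclideanSpace.real_inner_toLp, EuclideanSpace.real_inner_toLp, two_mul,
    ← Matrix.dotProduct_transpose_mulVec, hP.eq]

theorem two_mul_inner_mulVec_error_dynamics [DecidableEq κ] {A P Q : Matrix ι ι ℝ}
    (hP : P.IsSymm) (hLyap : Aᵀ * P + P * A = -Q) (B : Matrix ι κ ℝ) (Φ : Matrix κ ν ℝ)
    (e : EuclideanSpace ℝ ι) (θ : EuclideanSpace ℝ ν) (l u : EuclideanSpace ℝ κ) :
    2 * ⟪e, toLp 2 (P *ᵥ (A *ᵥ e + B *ᵥ (Φ *ᵥ θ - Matrix.diagonal l *ᵥ u)))⟫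
      = -⟪e, toLp 2 (Q *ᵥ e)⟫ + 2 * ⟪θ, toLp 2 ((Φᵀ * Bᵀ * P) *ᵥ e)⟫
        - 2 * ⟪l, toLp 2 ((Matrix.diagonal u * Bᵀ * P) *ᵥ e)⟫ := by
  simp only [EuclideanSpace.real_inner_toLp, Matrix.mulVec_add, dotProduct_add, mul_add,
    Matrix.two_mul_dotProduct_mulVec_of_lyapunov hP hLyap,
    Matrix.dotProduct_mulVec_mulVec_sub_diagonal_mulVec hP]
  ring

end EuclideanSpace

/-- claims (a)–(c) of Theorem 3. For the adaptive error model with both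
matched parametric uncertainty `θ̃` and input-matrix uncertainty `λ̃`, the Lyapunov function
`V = eᵀPe + ‖θ̃‖²/γ_θ + ‖λ̃‖²/γ_λ` is nonincreasing on `[0, ∞)` and the tracking error is
bounded by `√(V(0)/λ_min(P))`. -/
theorem lyapunov_nonincreasing_error_bounded_input_uncertainty
    {n m p : ℕ} (Am P Q : Matrix (Fin n) (Fin n) ℝ) (hP : P.IsSymm)
    (hLyap : Amᵀ * P + P * Am = -Q)
    (hQ : ∀ x : EuclideanSpace ℝ (Fin n), 0 ≤ ⟪x, WithLp.toLp 2 (Q.mulVec x)⟫)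
    (B : Matrix (Fin n) (Fin m) ℝ) (γθ γlam : ℝ) (hγθ : 0 < γθ) (hγlam : 0 < γlam)
    (Φ : ℝ → Matrix (Fin m) (Fin p) ℝ) (u : ℝ → EuclideanSpace ℝ (Fin m))
    (e : ℝ → EuclideanSpace ℝ (Fin n)) (θ : ℝ → EuclideanSpace ℝ (Fin p))
    (lam : ℝ → EuclideanSpace ℝ (Fin m))
    (he : Differentiable ℝ e) (hθ : Differentiable ℝ θ) (hlam : Differentiable ℝ lam)
    (hdyn : ∀ t ≥ (0:ℝ),
      deriv e t = Am.mulVec (e t) +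
        B.mulVec ((Φ t).mulVec (θ t) - (Matrix.diagonal (lam t)).mulVec (u t)))
    (hadaptθ : ∀ t ≥ (0:ℝ),
      ⟪θ t, deriv θ t⟫ ≤ -γθ * ⟪θ t, WithLp.toLp 2 (((Φ t)ᵀ * Bᵀ * P).mulVec (e t))⟫)
    (hadaptlam : ∀ t ≥ (0:ℝ),
      ⟪lam t, deriv lam t⟫ ≤ γlam * ⟪lam t, WithLp.toLp 2 ((Matrix.diagonal (u t) * Bᵀ * P).mulVec (e t))⟫)
    (V : ℝ → ℝ)
    (hV : ∀ t, V t = ⟪e t, WithLp.toLp 2 (P.mulVec (e t))⟫ + ‖θ t‖ ^ 2 / γθ + ‖lam t‖ ^ 2 / γlam) :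
    (∀ s t : ℝ, 0 ≤ s → s ≤ t → V t ≤ V s) ∧
    (∀ μ : ℝ, 0 < μ →
      (∀ x : EuclideanSpace ℝ (Fin n), μ * ‖x‖ ^ 2 ≤ ⟪x, WithLp.toLp 2 (P.mulVec x)⟫) →
      ∀ t ≥ (0:ℝ), ‖e t‖ ^ 2 ≤ V 0 / μ) := by
  have hV' : ∀ t, HasDerivAt V (2 * ⟪e t, toLp 2 (P *ᵥ ofLp (deriv e t))⟫
      + 2 * ⟪θ t, deriv θ t⟫ / γθ + 2 * ⟪lam t, deriv lam t⟫ / γlam) t := by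
    intro t
    rw [funext hV]
    exact (((he t).hasDerivAt.inner_toLp_mulVec_self hP).add
      ((hθ t).hasDerivAt.norm_sq.div_const γθ)).add ((hlam t).hasDerivAt.norm_sq.div_const γlam)
  have hanti : AntitoneOn V (Set.Ici 0) := by
    refine antitoneOn_of_hasDerivWithinAt_nonpos (convex_Ici 0)
      (HasDerivAt.continuousOn fun t _ => hV' t) (fun t _ => (hV' t).hasDerivWithinAt) ?_
    intro t ht
    replace ht : 0 ≤ t := (interior_Ici.subset ht).le
    have hθt : 2 * ⟪θ t, deriv θ t⟫ / γθ ≤ -2 * ⟪θ t, toLp 2 (((Φ t)ᵀ * Bᵀ * P) *ᵥ e t)⟫ := by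
      rw [div_le_iff₀ hγθ]; linarith [hadaptθ t ht]
    have hlamt : 2 * ⟪lam t, deriv lam t⟫ / γlam
        ≤ 2 * ⟪lam t, toLp 2 ((Matrix.diagonal (u t) * Bᵀ * P) *ᵥ e t)⟫ := by
      rw [div_le_iff₀ hγlam]; linarith [hadaptlam t ht]
    rw [hdyn t ht, two_mul_inner_mulVec_error_dynamics hP hLyap]
    linarith [hQ (e t)]
  refine ⟨fun s t hs hst => hanti hs (hs.trans hst) hst, fun μ hμ hPμ t ht => ?_⟩
  rw [le_div_iff₀ hμ]
  calc ‖e t‖ ^ 2 * μ ≤ V t := by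
        rw [hV]; linarith [hPμ (e t), div_nonneg (sq_nonneg ‖θ t‖) hγθ.le,
          div_nonneg (sq_nonneg ‖lam t‖) hγlam.le]
    _ ≤ V 0 := hanti Set.self_mem_Ici ht ht
end

section
/- Let f : ℝ → ℝ be differentiable, let α > 0 and δ > 0 be real numbers, and suppose f(0) ≥ 0 and for every t ≥ 0, if f(t) ≤ δ/(3α) then f'(t) ≥ -α·f(t) + δ. Then f(t) ≥ 0 for every t ≥ 0. -/
/-- analytic core of claim (a) of Theorem 4. If `f(0) ≥ 0` and
`f'(t) ≥ -α·f(t) + δ` whenever `f(t) ≤ δ/(3α)` (for `t ≥ 0`), then `f(t) ≥ 0` for all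
`t ≥ 0`. -/
theorem nonneg_of_deriv_ge_on_sublevel
    (f : ℝ → ℝ) (hf : Differentiable ℝ f) (α δ : ℝ) (hα : 0 < α) (hδ : 0 < δ)
    (h0 : 0 ≤ f 0)
    (hbar : ∀ t ≥ (0:ℝ), f t ≤ δ / (3 * α) → deriv f t ≥ -α * f t + δ) :
    ∀ t ≥ (0:ℝ), 0 ≤ f t := by
  intro t ht
  by_contra hneg
  push_neg at hneg
  have hδ3 : 0 < δ / (3 * α) := by positivity
  set S : Set ℝ := {u | u ∈ Set.Icc (0:ℝ) t ∧ 0 ≤ f u} with hS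
  have hSne : S.Nonempty := ⟨0, ⟨le_refl 0, ht⟩, h0⟩
  have hSbdd : BddAbove S := ⟨t, fun u hu => hu.1.2⟩
  have hSclosed : IsClosed S := by
    have : S = Set.Icc (0:ℝ) t ∩ f ⁻¹' Set.Ici 0 := by
      ext u; simp [hS, Set.mem_Icc, and_assoc]
    rw [this]
    exact isClosed_Icc.inter (isClosed_Ici.preimage hf.continuous)
  set s := sSup S with hs
  have hsS : s ∈ S := hSclosed.csSup_mem hSne hSbdd
  obtain ⟨⟨hs0, hst⟩, hfs⟩ := hsS
  have hslt : s < t := by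
    rcases lt_or_eq_of_le hst with h | h
    · exact h
    · exact absurd (h ▸ hfs) (not_le.mpr hneg)
  have hnegIoo : ∀ u ∈ Set.Ioo s t, f u < 0 := by
    intro u hu
    by_contra h
    push_neg at h
    have : u ∈ S := ⟨⟨hs0.trans hu.1.le, hu.2.le⟩, h⟩
    exact absurd (le_csSup hSbdd this) (not_le.mpr hu.1)
  have hmono : StrictMonoOn f (Set.Icc s t) := by
    apply StrictMonoOn.mono (s := Set.Icc s t)
    · apply strictMonoOn_of_deriv_pos (convex_Icc s t) hf.continuous.continuousOn
      intro u hu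
      rw [interior_Icc] at hu
      have hu0 : 0 ≤ u := hs0.trans hu.1.le
      have hfu : f u < 0 := hnegIoo u hu
      have := hbar u hu0 (hfu.le.trans hδ3.le)
      nlinarith
    · exact le_refl _
  have : f s < f t := hmono ⟨le_refl s, hslt.le⟩ ⟨hslt.le, le_refl t⟩ hslt
  linarith
end

section
/- Let A be a real n×n matrix all of whose complex eigenvalues have negative real part (i.e., every μ in the spectrum of the complexification of A satisfies Re(μ) < 0). Let u : ℝ → ℝ^n be a function with ‖u(t)‖ ≤ M for all t ≥ 0 and some M ≥ 0, and let x : ℝ → ℝ^n be differentiable with x'(t) = A·x(t) + u(t) for all t ≥ 0. Then x is bounded on [0, ∞): there exists K ≥ 0 such that ‖x(t)‖ ≤ K for all t ≥ 0. -/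
/-!
Variation of constants: for `0 ≤ s ≤ t` the curve `s ↦ exp ((t - s) A) x(s)` runs from
`exp (t A) x(0)` to `x(t)` with velocity `exp ((t - s) A) u(s)`, so
`‖x(t)‖ ≤ C (‖x(0)‖ + M / ε)` once `‖exp (t A)‖ ≤ C e^{-ε t}` for `t ≥ 0`.

This decay is read off the complexification `T` of `A`: the isometric embedding `ℝⁿ → ℂⁿ`
intertwines `exp (t A)` with `exp (t T)`. On a finite-dimensional space `exp T` is a polynomial
in `T`, so polynomial spectral mapping and an eigenvector give `σ(exp T) ⊆ exp σ(T)`, which by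
compactness of `σ(T)` lies in the disc of radius `e^{-2ε}`. Gelfand's formula then bounds
`‖(exp T)^k‖` by `C e^{-ε k}`, and the semigroup law passes to real times.
-/

open NormedSpace

section Gelfand

variable {A : Type*} [NormedRing A] [NormedAlgebra ℂ A] [CompleteSpace A]

theorem exists_norm_pow_le_mul_pow_of_spectralRadius_lt (a : A) {r : ℝ}
    (hr : spectralRadius ℂ a < ENNReal.ofReal r) : ∃ C, ∀ k : ℕ, ‖a ^ k‖ ≤ C * r ^ k := by
  have hr0 : 0 < r := ENNReal.ofReal_pos.mp (pos_of_gt hr)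
  have hev : ∀ᶠ k : ℕ in Filter.atTop, ‖a ^ k‖ ≤ 1 * ‖r ^ k‖ := by
    filter_upwards [(spectrum.pow_norm_pow_one_div_tendsto_nhds_spectralRadius a).eventually_lt_const
      hr, Filter.eventually_ne_atTop 0] with k hk hk0
    rw [ENNReal.ofReal_lt_ofReal_iff hr0, one_div] at hk
    rw [one_mul, Real.norm_of_nonneg (pow_nonneg hr0.le k),
      ← Real.rpow_inv_natCast_pow (norm_nonneg (a ^ k)) hk0]
    exact pow_le_pow_left₀ (by positivity) hk.le k
  obtain ⟨C, -, hC⟩ := Asymptotics.bound_of_isBigO_nat_atTop (Asymptotics.IsBigO.of_bound 1 hev)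
  refine ⟨C, fun k => ?_⟩
  simpa [abs_of_pos hr0] using hC (pow_ne_zero k hr0.ne')

theorem exists_norm_exp_smul_le_of_spectralRadius_lt (a : A) {ε : ℝ} (hε : 0 ≤ ε)
    (ha : spectralRadius ℂ (exp a) < ENNReal.ofReal (Real.exp (-ε))) :
    ∃ C, ∀ t : ℝ, 0 ≤ t → ‖exp ((t : ℂ) • a)‖ ≤ C * Real.exp (-(ε * t)) := by
  let +nondep : NormedAlgebra ℚ A := .restrictScalars ℚ ℂ A
  obtain ⟨C, hC⟩ := exists_norm_pow_le_mul_pow_of_spectralRadius_lt (exp a) ha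
  obtain ⟨K, hK⟩ := isCompact_Icc.exists_bound_of_continuousOn
    (f := fun s : ℝ => exp ((s : ℂ) • a)) (s := Set.Icc 0 1) (by fun_prop)
  have hC0 : 0 ≤ C := by simpa using (norm_nonneg _).trans (hC 0)
  have hK0 : 0 ≤ K := (norm_nonneg _).trans (hK 0 (by simp))
  refine ⟨C * K * Real.exp ε, fun t ht => ?_⟩
  set k := ⌊t⌋₊
  have hkt : (k : ℝ) ≤ t := Nat.floor_le ht
  have htk : t < k + 1 := Nat.lt_floor_add_one t
  have hsplit : exp ((t : ℂ) • a) = exp a ^ k * exp (((t - k : ℝ) : ℂ) • a) := by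
    rw [← exp_nsmul, ← exp_add_of_commute ((Commute.refl a).smul_left _ |>.smul_right _)]
    congr 1
    push_cast
    rw [← Nat.cast_smul_eq_nsmul ℂ, ← add_smul, add_sub_cancel]
  calc ‖exp ((t : ℂ) • a)‖ ≤ ‖exp a ^ k‖ * ‖exp (((t - k : ℝ) : ℂ) • a)‖ :=
        hsplit ▸ norm_mul_le _ _
    _ ≤ C * Real.exp (-ε) ^ k * K :=
        mul_le_mul (hC k) (hK _ ⟨by linarith, by linarith⟩) (norm_nonneg _) (by positivity)
    _ ≤ C * K * Real.exp ε * Real.exp (-(ε * t)) := by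
        rw [← Real.exp_nat_mul, mul_right_comm, mul_assoc _ (Real.exp ε), ← Real.exp_add]
        gcongr
        nlinarith

end Gelfand

section SpectrumExp

variable {F : Type*} [NormedAddCommGroup F] [NormedSpace ℂ F] [FiniteDimensional ℂ F]

theorem exp_apply_of_hasEigenvector {T : F →L[ℂ] F} {μ : ℂ} {v : F}
    (hv : Module.End.HasEigenvector (T : F →ₗ[ℂ] F) μ v) : exp T v = Complex.exp μ • v := by
  have hT := (exp_series_hasSum_exp' (𝕂 := ℂ) T).mapL (ContinuousLinearMap.apply ℂ F v)
  have hμ := (exp_series_hasSum_exp' (𝕂 := ℂ) μ).smul_const v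
  rw [Complex.exp_eq_exp_ℂ]
  refine hT.unique (hμ.congr_fun fun k => ?_)
  rw [ContinuousLinearMap.apply_apply, smul_apply, ← ContinuousLinearMap.coe_coe,
    ContinuousLinearMap.toLinearMap_pow, hv.pow_apply, smul_smul, smul_eq_mul]

theorem exists_aeval_eq_exp (T : F →L[ℂ] F) :
    ∃ p : Polynomial ℂ, Polynomial.aeval T p = exp T := by
  have h : exp T ∈ Subalgebra.toSubmodule (Algebra.adjoin ℂ {T}) :=
    (Subalgebra.toSubmodule _).closed_of_finiteDimensional.mem_of_tendsto
      (exp_series_hasSum_exp' (𝕂 := ℂ) T).tendsto_sum_nat <| .of_forall fun _ =>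
        Submodule.sum_mem _ fun k _ =>
          Submodule.smul_mem _ _ (Subalgebra.pow_mem _ (Algebra.self_mem_adjoin_singleton ℂ T) k)
  rwa [Subalgebra.mem_toSubmodule, Algebra.adjoin_singleton_eq_range_aeval] at h

theorem spectrum_exp_subset_exp_image (T : F →L[ℂ] F) :
    spectrum ℂ (exp T) ⊆ Complex.exp '' spectrum ℂ T := by
  nontriviality (F →L[ℂ] F)
  obtain ⟨p, hp⟩ := exists_aeval_eq_exp T
  rw [← hp, spectrum.map_polynomial_aeval_of_nonempty T p (spectrum.nonempty T)]
  rintro _ ⟨μ, hμ, rfl⟩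
  refine ⟨μ, hμ, ?_⟩
  rw [ContinuousLinearMap.spectrum_eq, ← Module.End.hasEigenvalue_iff_mem_spectrum] at hμ
  obtain ⟨v, hv⟩ := hμ.exists_hasEigenvector
  have hpT := congrArg (Module.End.toContinuousLinearMap F).symm hp
  rw [← Polynomial.aeval_algHom_apply] at hpT
  refine smul_left_injective ℂ hv.2 ?_
  dsimp only
  rw [← exp_apply_of_hasEigenvector hv, ← Module.End.aeval_apply_of_hasEigenvector hv]
  exact (LinearMap.congr_fun hpT v).symm

theorem exists_norm_exp_smul_le_of_forall_re_neg (T : F →L[ℂ] F)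
    (hT : ∀ μ ∈ spectrum ℂ T, μ.re < 0) :
    ∃ C, ∃ ε > 0, ∀ t : ℝ, 0 ≤ t → ‖exp ((t : ℂ) • T)‖ ≤ C * Real.exp (-(ε * t)) := by
  obtain ⟨c, hc, hcT⟩ := (spectrum.isCompact T).exists_forall_le' (f := fun μ : ℂ => -μ.re)
    (a := 0) Complex.continuous_re.neg.continuousOn fun μ hμ => neg_pos.mpr (hT μ hμ)
  have hρ : spectralRadius ℂ (exp T) < ENNReal.ofReal (Real.exp (-(c / 2))) := by
    refine lt_of_le_of_lt (b := ENNReal.ofReal (Real.exp (-c))) (iSup₂_le fun z hz => ?_) ?_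
    · obtain ⟨μ, hμ, rfl⟩ := spectrum_exp_subset_exp_image T hz
      rw [← enorm_eq_nnnorm, ← ofReal_norm, Complex.norm_exp]
      exact ENNReal.ofReal_le_ofReal (Real.exp_le_exp.mpr (by linarith [hcT μ hμ]))
    · exact (ENNReal.ofReal_lt_ofReal_iff (Real.exp_pos _)).mpr (Real.exp_lt_exp.mpr (by linarith))
  obtain ⟨C, hC⟩ := exists_norm_exp_smul_le_of_spectralRadius_lt T (half_pos hc).le hρ
  exact ⟨C, c / 2, half_pos hc, hC⟩

end SpectrumExp

section Intertwining

variable {𝕜 E F : Type*} [RCLike 𝕜] [NormedAddCommGroup E] [NormedSpace ℝ E] [CompleteSpace E]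
  [NormedAddCommGroup F] [NormedSpace 𝕜 F] [NormedSpace ℝ F] [IsScalarTower ℝ 𝕜 F]
  [CompleteSpace F] {L : E →L[ℝ] E} {T : F →L[𝕜] F}

theorem exp_apply_of_semiconj (J : E →L[ℝ] F) (h : Function.Semiconj J L T) (v : E) :
    J (exp L v) = exp T (J v) := by
  have hL := ((exp_series_hasSum_exp' (𝕂 := ℝ) L).mapL (ContinuousLinearMap.apply ℝ E v)).mapL J
  have hT := (exp_series_hasSum_exp' (𝕂 := 𝕜) T).mapL (ContinuousLinearMap.apply 𝕜 F (J v))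
  refine hL.unique (hT.congr_fun fun k => ?_)
  change J ((k.factorial⁻¹ : ℝ) • (L ^ k) v) = (k.factorial⁻¹ : 𝕜) • (T ^ k) (J v)
  rw [map_smul, FunLike.coe_pow_eq_iterate, FunLike.coe_pow_eq_iterate, (h.iterate_right k) v,
    RCLike.real_smul_eq_coe_smul (K := 𝕜), RCLike.ofReal_inv, RCLike.ofReal_natCast]

theorem norm_exp_smul_le_of_semiconj (J : E →ₗᵢ[ℝ] F) (h : Function.Semiconj J L T) (t : ℝ) :
    ‖exp (t • L)‖ ≤ ‖exp ((t : 𝕜) • T)‖ := by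
  have ht : Function.Semiconj J ⇑(t • L) ⇑((t : 𝕜) • T) := fun v => by
    simp only [smul_apply, map_smul, h v, RCLike.real_smul_eq_coe_smul (K := 𝕜)]
  refine ContinuousLinearMap.opNorm_le_bound _ (norm_nonneg _) fun v => ?_
  rw [← J.norm_map, ← J.coe_toContinuousLinearMap, exp_apply_of_semiconj _ ht]
  exact ((exp ((t : 𝕜) • T)).le_opNorm (J v)).trans_eq (by rw [J.norm_map])

end Intertwining

noncomputable def EuclideanSpace.ofRealₗᵢ (ι : Type*) [Fintype ι] :
    EuclideanSpace ℝ ι →ₗᵢ[ℝ] EuclideanSpace ℂ ι where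
  toFun v := WithLp.toLp 2 fun i => (v i : ℂ)
  map_add' v w := by ext; simp
  map_smul' r v := by ext; simp
  norm_map' v := by simp [EuclideanSpace.norm_eq]

theorem Matrix.semiconj_ofRealₗᵢ_toEuclideanCLM {ι : Type*} [Fintype ι] [DecidableEq ι]
    (A : Matrix ι ι ℝ) :
    Function.Semiconj (EuclideanSpace.ofRealₗᵢ ι) (Matrix.toEuclideanCLM (𝕜 := ℝ) A)
      (Matrix.toEuclideanCLM (𝕜 := ℂ) (A.map (algebraMap ℝ ℂ))) := by
  intro v
  ext i
  simp [EuclideanSpace.ofRealₗᵢ, Matrix.mulVec, dotProduct]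

section VariationOfConstants

variable {E : Type*} [NormedAddCommGroup E] [NormedSpace ℝ E] [CompleteSpace E]

theorem hasDerivAt_exp_sub_smul_apply (L : E →L[ℝ] E) {x : ℝ → E} {x' : E} {s : ℝ}
    (hx : HasDerivAt x x' s) (t : ℝ) :
    HasDerivAt (fun s => exp ((t - s) • L) (x s)) (exp ((t - s) • L) (x' - L (x s))) s := by
  have hexp := (hasDerivAt_exp_smul_const L (t - s)).scomp s ((hasDerivAt_id s).const_sub t)
  refine (hexp.clm_apply hx).congr_deriv ?_
  simp only [Function.comp_apply, neg_one_smul, neg_apply, mul_apply_eq_comp, map_sub]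
  abel

theorem norm_le_of_deriv_eq_of_norm_exp_smul_le (L : E →L[ℝ] E) {C ε : ℝ} (hε : 0 < ε)
    (hL : ∀ t : ℝ, 0 ≤ t → ‖exp (t • L)‖ ≤ C * Real.exp (-(ε * t)))
    {u : ℝ → E} {M : ℝ} (hu : ∀ t ≥ (0 : ℝ), ‖u t‖ ≤ M)
    {x : ℝ → E} (hx : Differentiable ℝ x) (hdyn : ∀ t ≥ (0 : ℝ), deriv x t = L (x t) + u t)
    {t : ℝ} (ht : 0 ≤ t) : ‖x t‖ ≤ C * (‖x 0‖ + M / ε) := by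
  have hC : 0 ≤ C := by simpa using (norm_nonneg _).trans (hL 0 le_rfl)
  have hM : 0 ≤ M := (norm_nonneg _).trans (hu 0 le_rfl)
  set f : ℝ → E := fun s => exp ((t - s) • L) (x s)
  set B : ℝ → ℝ := fun s => C * ‖x 0‖ + C * M / ε * Real.exp (-(ε * (t - s)))
  have hf : ∀ s, HasDerivAt f (exp ((t - s) • L) (deriv x s - L (x s))) s := fun s =>
    hasDerivAt_exp_sub_smul_apply L (hx s).hasDerivAt t
  have hB : ∀ s, HasDerivAt B (C * M * Real.exp (-(ε * (t - s)))) s := by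
    intro s
    refine ((((hasDerivAt_id' s).const_sub t).const_mul ε).neg.exp.const_mul (C * M / ε)
      |>.const_add (C * ‖x 0‖)).congr_deriv ?_
    simp only [Pi.neg_apply]
    field_simp
  have hB0 : ‖f 0‖ ≤ B 0 := by
    calc ‖f 0‖ ≤ C * Real.exp (-(ε * t)) * ‖x 0‖ := by
          rw [show f 0 = exp (t • L) (x 0) by simp [f]]
          exact (exp (t • L)).le_opNorm (x 0) |>.trans
            (mul_le_mul_of_nonneg_right (hL t ht) (norm_nonneg _))
      _ ≤ C * ‖x 0‖ := by
          rw [mul_right_comm]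
          exact mul_le_of_le_one_right (by positivity) (Real.exp_le_one_iff.mpr (by nlinarith))
      _ ≤ B 0 := le_add_of_nonneg_right (by positivity)
  have hbound : ∀ s ∈ Set.Ico 0 t, ‖exp ((t - s) • L) (deriv x s - L (x s))‖ ≤
      C * M * Real.exp (-(ε * (t - s))) := by
    rintro s ⟨hs0, hst⟩
    rw [hdyn s hs0, add_sub_cancel_left]
    calc _ ≤ C * Real.exp (-(ε * (t - s))) * ‖u s‖ :=
          ((exp ((t - s) • L)).le_opNorm _).trans
            (mul_le_mul_of_nonneg_right (hL _ (by linarith)) (norm_nonneg _))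
      _ ≤ C * M * Real.exp (-(ε * (t - s))) := by
          rw [mul_right_comm]
          exact mul_le_mul_of_nonneg_right (mul_le_mul_of_nonneg_left (hu s hs0) hC) (by positivity)
  have hfB := image_norm_le_of_norm_deriv_right_le_deriv_boundary
    (fun s _ => (hf s).continuousAt.continuousWithinAt) (fun s _ => (hf s).hasDerivWithinAt)
    hB0 hB hbound (Set.right_mem_Icc.mpr ht)
  simpa [f, B, mul_add, mul_div_assoc] using hfB

end VariationOfConstants

theorem bounded_state_of_hurwitz_bounded_input_general
    {n : ℕ} (A : Matrix (Fin n) (Fin n) ℝ)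
    (hA : ∀ μ ∈ spectrum ℂ (A.map (algebraMap ℝ ℂ)), μ.re < 0)
    (u : ℝ → EuclideanSpace ℝ (Fin n)) (M : ℝ)
    (hu : ∀ t ≥ (0:ℝ), ‖u t‖ ≤ M)
    (x : ℝ → EuclideanSpace ℝ (Fin n)) (hx : Differentiable ℝ x)
    (hdyn : ∀ t ≥ (0:ℝ), deriv x t = (show EuclideanSpace ℝ (Fin n) from WithLp.toLp 2 (A.mulVec (x t))) + u t) :
    ∃ K ≥ (0:ℝ), ∀ t ≥ (0:ℝ), ‖x t‖ ≤ K := by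
  have hT : ∀ μ ∈ spectrum ℂ (Matrix.toEuclideanCLM (𝕜 := ℂ) (A.map (algebraMap ℝ ℂ))),
      μ.re < 0 := by
    rwa [AlgEquiv.spectrum_eq]
  obtain ⟨C, ε, hε, hdecay⟩ := exists_norm_exp_smul_le_of_forall_re_neg _ hT
  have hL : ∀ t : ℝ, 0 ≤ t → ‖exp (t • Matrix.toEuclideanCLM (𝕜 := ℝ) A)‖ ≤
      C * Real.exp (-(ε * t)) := fun t ht =>
    (norm_exp_smul_le_of_semiconj _ A.semiconj_ofRealₗᵢ_toEuclideanCLM t).trans (hdecay t ht)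
  have hbound : ∀ t ≥ (0:ℝ), ‖x t‖ ≤ C * (‖x 0‖ + M / ε) := fun t ht =>
    norm_le_of_deriv_eq_of_norm_exp_smul_le _ hε hL hu hx hdyn ht
  exact ⟨_, (norm_nonneg _).trans (hbound 0 le_rfl), hbound⟩

/-- bounded-input bounded-state property of the Hurwitz reference model,
used for claim (c) of Theorem 1 and claim (d) of Theorem 3. If all complex eigenvalues of
`A` have negative real part and the input `u` is bounded on `[0, ∞)`, then any solution of
`x' = A·x + u` is bounded on `[0, ∞)`. -/
theorem bounded_state_of_hurwitz_bounded_input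
    {n : ℕ} (A : Matrix (Fin n) (Fin n) ℝ)
    (hA : ∀ μ ∈ spectrum ℂ (A.map (algebraMap ℝ ℂ)), μ.re < 0)
    (u : ℝ → EuclideanSpace ℝ (Fin n)) (M : ℝ) (hM : 0 ≤ M)
    (hu : ∀ t ≥ (0:ℝ), ‖u t‖ ≤ M)
    (x : ℝ → EuclideanSpace ℝ (Fin n)) (hx : Differentiable ℝ x)
    (hdyn : ∀ t ≥ (0:ℝ), deriv x t = (show EuclideanSpace ℝ (Fin n) from WithLp.toLp 2 (A.mulVec (x t))) + u t) :
    ∃ K ≥ (0:ℝ), ∀ t ≥ (0:ℝ), ‖x t‖ ≤ K :=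
  bounded_state_of_hurwitz_bounded_input_general A hA u M hu x hx hdyn
end
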